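/- If I is a nonempty indexing set and 𝒰_i is a maximal frame-generating join-specification for a poset P for each i ∈ I, then ⋂_I 𝒰_i is a maximal frame-generating join-specification. -/
import Mathlib


variable {P : Type*} [PartialOrder P]

/-- Down-closure of a set. -/
def dcl (S : Set P) : Set P := {p | ∃ s ∈ S, p ≤ s}

/-- Principal downset. -/
def pd (p : P) : Set P := {q | q ≤ p}

/-- Standard closure operator: extensive, monotone, idempotent, with Γ({p}) = p↓. -/
def IsStdClosure (Γ : Set P → Set P) : Prop :=
  (∀ S, S ⊆ Γ S) ∧ (∀ S T : Set P, S ⊆ T → Γ S ⊆ Γ T) ∧ (∀ S, Γ (Γ S) = Γ S) ∧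
    ∀ p : P, Γ {p} = pd p

def IsClosedIn (Γ : Set P → Set P) (C : Set P) : Prop := Γ C = C

/-- Join-specification: all joins of members exist, and all singletons belong. -/
def IsJoinSpec (𝒰 : Set (Set P)) : Prop :=
  (∀ S ∈ 𝒰, ∃ x : P, IsLUB S x) ∧ ∀ p : P, {p} ∈ 𝒰

/-- 𝒰-ideal: down-closed and closed under joins of members of 𝒰. -/
def IsUIdeal (𝒰 : Set (Set P)) (I : Set P) : Prop :=
  IsLowerSet I ∧ ∀ S ∈ 𝒰, S ⊆ I → ∀ x : P, IsLUB S x → x ∈ I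

/-- The smallest 𝒰-ideal containing S. -/
def GammaU (𝒰 : Set (Set P)) (S : Set P) : Set P :=
  ⋂₀ {I : Set P | IsUIdeal 𝒰 I ∧ S ⊆ I}

/-- 𝒰⁺: sets whose join exists and lies in the 𝒰-ideal closure. -/
def UPlus (𝒰 : Set (Set P)) : Set (Set P) :=
  {S : Set P | ∃ x : P, IsLUB S x ∧ x ∈ GammaU 𝒰 S}

/-- Υ_𝒰(S) = { ⋁T : T ∈ 𝒰⁺, T ⊆ S↓ }. -/
def Upsilon (𝒰 : Set (Set P)) (S : Set P) : Set P :=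
  {x : P | ∃ T ∈ UPlus 𝒰, T ⊆ dcl S ∧ IsLUB T x}

/-- The complete lattice of 𝒰-ideals (meets = intersections, joins = closure of unions)
is a frame. -/
def IdealFrame (𝒰 : Set (Set P)) : Prop :=
  ∀ D : Set P, IsUIdeal 𝒰 D → ∀ 𝒞 : Set (Set P), (∀ C ∈ 𝒞, IsUIdeal 𝒰 C) →
    D ∩ GammaU 𝒰 (⋃₀ 𝒞) = GammaU 𝒰 (⋃ C ∈ 𝒞, D ∩ C)

/-- The complete lattice of Γ-closed sets is a frame. -/
def ClosFrame (Γ : Set P → Set P) : Prop :=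
  ∀ D : Set P, IsClosedIn Γ D → ∀ 𝒞 : Set (Set P), (∀ C ∈ 𝒞, IsClosedIn Γ C) →
    D ∩ Γ (⋃₀ 𝒞) = Γ (⋃ C ∈ 𝒞, D ∩ C)

section Helpers

variable {P : Type*} [PartialOrder P]

lemma gammaU_ideal (𝒰 : Set (Set P)) (S : Set P) : IsUIdeal 𝒰 (GammaU 𝒰 S) := by
  constructor
  · intro a b hba ha I hI
    exact hI.1.1 hba (ha I hI)
  · intro T hT hTsub x hx I hI
    exact hI.1.2 T hT (fun t ht => hTsub ht I hI) x hx

lemma subset_gammaU (𝒰 : Set (Set P)) (S : Set P) : S ⊆ GammaU 𝒰 S := by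
  intro s hs I hI; exact hI.2 hs

lemma gammaU_min {𝒰 : Set (Set P)} {S I : Set P} (hI : IsUIdeal 𝒰 I) (hSI : S ⊆ I) :
    GammaU 𝒰 S ⊆ I := fun x hx => hx I ⟨hI, hSI⟩

lemma dcl_subset_ideal {𝒰 : Set (Set P)} {S I : Set P} (hI : IsUIdeal 𝒰 I) (hSI : S ⊆ I) :
    dcl S ⊆ I := by
  rintro p ⟨s, hs, hps⟩; exact hI.1 hps (hSI hs)

lemma gammaU_mono {𝒰 : Set (Set P)} {S T : Set P} (h : S ⊆ T) :
    GammaU 𝒰 S ⊆ GammaU 𝒰 T :=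
  gammaU_min (gammaU_ideal 𝒰 T) (h.trans (subset_gammaU 𝒰 T))

lemma gammaU_dcl (𝒰 : Set (Set P)) (S : Set P) : GammaU 𝒰 (dcl S) = GammaU 𝒰 S := by
  apply le_antisymm
  · exact gammaU_min (gammaU_ideal 𝒰 S)
      (dcl_subset_ideal (gammaU_ideal 𝒰 S) (subset_gammaU 𝒰 S))
  · exact gammaU_mono (fun s hs => ⟨s, hs, le_rfl⟩)

lemma isUIdeal_pd (𝒰 : Set (Set P)) (x : P) : IsUIdeal 𝒰 (pd x) := by
  constructor
  · intro a b hba ha; exact hba.trans ha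
  · intro T _ hT y hy; exact hy.2 hT

lemma isUIdeal_inter {𝒰 : Set (Set P)} {I J : Set P} (hI : IsUIdeal 𝒰 I)
    (hJ : IsUIdeal 𝒰 J) : IsUIdeal 𝒰 (I ∩ J) := by
  constructor
  · intro a b hba ha; exact ⟨hI.1 hba ha.1, hJ.1 hba ha.2⟩
  · intro T hT hTsub x hx
    exact ⟨hI.2 T hT (fun t ht => (hTsub ht).1) x hx,
           hJ.2 T hT (fun t ht => (hTsub ht).2) x hx⟩

lemma isUIdeal_anti {𝒰 𝒱 : Set (Set P)} (h : 𝒱 ⊆ 𝒰) {I : Set P}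
    (hI : IsUIdeal 𝒰 I) : IsUIdeal 𝒱 I :=
  ⟨hI.1, fun T hT => hI.2 T (h hT)⟩

/-- Key characterization: for a maximal frame-generating join-specification,
`x ∈ Γ_𝒰(S)` iff `E := x↓ ∩ S↓` is in `𝒰` and `x = ⋁E`. -/
lemma gammaU_char {𝒰 : Set (Set P)} (hmax : UPlus 𝒰 = 𝒰) (hf : IdealFrame 𝒰)
    (S : Set P) (x : P) :
    x ∈ GammaU 𝒰 S ↔ (pd x ∩ dcl S ∈ 𝒰 ∧ IsLUB (pd x ∩ dcl S) x) := by
  set E : Set P := pd x ∩ dcl S with hE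
  have hEub : x ∈ upperBounds E := fun e he => he.1
  constructor
  · intro hx
    -- apply the frame law with D = pd x, 𝒞 = principal downsets of elements of dcl S
    have hframe := hf (pd x) (isUIdeal_pd 𝒰 x) (pd '' dcl S)
      (by rintro C ⟨s, _, rfl⟩; exact isUIdeal_pd 𝒰 s)
    have hU1 : ⋃₀ (pd '' dcl S) = dcl S := by
      ext q; constructor
      · rintro ⟨C, ⟨s, hs, rfl⟩, hq⟩
        obtain ⟨t, ht, hst⟩ := hs
        exact ⟨t, ht, hq.trans hst⟩
      · intro hq; exact ⟨pd q, ⟨q, hq, rfl⟩, le_rfl⟩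
    have hU2 : (⋃ C ∈ pd '' dcl S, pd x ∩ C) = E := by
      ext q; constructor
      · rintro ⟨W, ⟨C, rfl⟩, hq⟩
        simp only [Set.mem_iUnion] at hq
        obtain ⟨⟨s, hs, rfl⟩, hqx, hqs⟩ := hq
        obtain ⟨t, ht, hst⟩ := hs
        exact ⟨hqx, t, ht, hqs.trans hst⟩
      · rintro ⟨hqx, hq⟩
        refine ⟨_, ⟨pd q, rfl⟩, ?_⟩
        simp only [Set.mem_iUnion]
        exact ⟨⟨q, hq, rfl⟩, hqx, le_rfl⟩
    rw [hU1, hU2, gammaU_dcl] at hframe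
    have hxE : x ∈ GammaU 𝒰 E := by
      rw [← hframe]; exact ⟨le_rfl, hx⟩
    have hlub : IsLUB E x := by
      refine ⟨hEub, fun u hu => ?_⟩
      have : GammaU 𝒰 E ⊆ pd u := gammaU_min (isUIdeal_pd 𝒰 u) (fun e he => hu he)
      exact this hxE
    refine ⟨?_, hlub⟩
    rw [← hmax]
    exact ⟨x, hlub, hxE⟩
  · rintro ⟨hEU, hlub⟩
    have hEplus : E ∈ UPlus 𝒰 := by rw [hmax]; exact hEU
    obtain ⟨y, hy, hyG⟩ := hEplus
    have hxy : y = x := hy.unique hlub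
    subst hxy
    have : GammaU 𝒰 E ⊆ GammaU 𝒰 S := by
      rw [← gammaU_dcl 𝒰 S]
      exact gammaU_mono (fun e he => he.2)
    exact this hyG

end Helpers
theorem stmt17 {ι : Type*} [Nonempty ι] (𝒰 : ι → Set (Set P))
    (hU : ∀ i, IsJoinSpec (𝒰 i)) (hmax : ∀ i, UPlus (𝒰 i) = 𝒰 i)
    (hf : ∀ i, IdealFrame (𝒰 i)) :
    IsJoinSpec (⋂ i, 𝒰 i) ∧ UPlus (⋂ i, 𝒰 i) = ⋂ i, 𝒰 i ∧
      IdealFrame (⋂ i, 𝒰 i) := by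
  obtain ⟨i₀⟩ := ‹Nonempty ι›
  set 𝒱 : Set (Set P) := ⋂ i, 𝒰 i with h𝒱
  have hVsub : ∀ i, 𝒱 ⊆ 𝒰 i := fun i S hS => Set.mem_iInter.1 hS i
  -- 𝒱 is a join-specification
  have hspec : IsJoinSpec 𝒱 := by
    constructor
    · intro S hS; exact (hU i₀).1 S (hVsub i₀ hS)
    · intro p; exact Set.mem_iInter.2 fun i => (hU i).2 p
  -- Γ_𝒱 S is contained in Γ_{𝒰 i} S
  have hGsub : ∀ i (S : Set P), GammaU 𝒱 S ⊆ GammaU (𝒰 i) S := fun i S =>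
    gammaU_min (isUIdeal_anti (hVsub i) (gammaU_ideal (𝒰 i) S)) (subset_gammaU (𝒰 i) S)
  -- characterization of Γ_𝒱
  have charV : ∀ (S : Set P) (x : P),
      x ∈ GammaU 𝒱 S ↔ (pd x ∩ dcl S ∈ 𝒱 ∧ IsLUB (pd x ∩ dcl S) x) := by
    intro S x
    constructor
    · intro hx
      have hi : ∀ i, pd x ∩ dcl S ∈ 𝒰 i ∧ IsLUB (pd x ∩ dcl S) x := fun i =>
        (gammaU_char (hmax i) (hf i) S x).1 (hGsub i S hx)
      exact ⟨Set.mem_iInter.2 fun i => (hi i).1, (hi i₀).2⟩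
    · rintro ⟨hEV, hlub⟩
      intro I hI
      exact hI.1.2 _ hEV (fun e he => dcl_subset_ideal hI.1 hI.2 he.2) x hlub
  -- maximality of 𝒱
  have hVmax : UPlus 𝒱 = 𝒱 := by
    apply Set.Subset.antisymm
    · rintro S ⟨x, hlub, hxG⟩
      refine Set.mem_iInter.2 fun i => ?_
      rw [← hmax i]
      exact ⟨x, hlub, hGsub i S hxG⟩
    · intro S hS
      obtain ⟨x, hx⟩ := hspec.1 S hS
      exact ⟨x, hx, (gammaU_ideal 𝒱 S).2 S hS (subset_gammaU 𝒱 S) x hx⟩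
  refine ⟨hspec, hVmax, ?_⟩
  -- the frame law for 𝒱
  intro D hD 𝒞 h𝒞
  apply Set.Subset.antisymm
  · rintro x ⟨hxD, hxG⟩
    rw [charV] at hxG
    obtain ⟨hEV, hlub⟩ := hxG
    have hEsub : pd x ∩ dcl (⋃₀ 𝒞) ⊆ ⋃ C ∈ 𝒞, D ∩ C := by
      rintro e ⟨hex, s, ⟨C, hC, hsC⟩, hes⟩
      simp only [Set.mem_iUnion]
      exact ⟨C, hC, hD.1 (le_trans hex le_rfl) hxD, (h𝒞 C hC).1 hes hsC⟩
    exact (gammaU_ideal 𝒱 _).2 _ hEV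
      (hEsub.trans (subset_gammaU 𝒱 _)) x hlub
  · apply gammaU_min (isUIdeal_inter hD (gammaU_ideal 𝒱 _))
    intro q hq
    simp only [Set.mem_iUnion] at hq
    obtain ⟨C, hC, hqD, hqC⟩ := hq
    exact ⟨hqD, subset_gammaU 𝒱 _ ⟨C, hC, hqC⟩⟩
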